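/- arXiv:2004.13098 — 4 statements merged into one kernel-verified Lean document; each statement's English description precedes it below -/
import Mathlib

section
/- Let n ≥ 2 and 1 ≤ k ≤ n−1 with k ≥ n−k, and let U ∈ U(n) be a unitary matrix written in block form U = [[X, Y], [Z, V]] with X ∈ ℂ^{(n−k)×k}, Y ∈ ℂ^{(n−k)×(n−k)}, Z ∈ ℂ^{k×k}, V ∈ ℂ^{k×(n−k)}. Then in ℂ[t] the characteristic polynomial of ZᴴZ factors as charpoly(ZᴴZ)(t) = (t − 1)^{2k−n} · charpoly(Y Yᴴ)(t). In particular 1 is a root of charpoly(ZᴴZ) of multiplicity at least 2k − n. -/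
/-!
Unitarity gives `ZᴴZ = 1 - XᴴX` and `YYᴴ = 1 - XXᴴ`. By Sylvester's identity `XᴴX` and `XXᴴ`
have the same characteristic polynomial up to a factor `t ^ (2k - n)`, and the substitution
`t ↦ 1 - t` turns this factor into `(t - 1) ^ (2k - n)`.
-/

open Matrix Polynomial

namespace Matrix

variable {R : Type*} [CommRing R] {m n : Type*} [Fintype m] [DecidableEq m] [Fintype n]
  [DecidableEq n]

theorem charpoly_one_sub (M : Matrix m m R) :
    (1 - M).charpoly = (-1) ^ Fintype.card m * M.charpoly.comp (1 - X) := by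
  have hmap : (charmatrix M).map (compRingHom (1 - X)) = -charmatrix (1 - M) := by
    ext i j : 1
    obtain rfl | h := eq_or_ne i j
    · simp only [coe_compRingHom, map_apply, charmatrix_apply_eq, sub_comp, X_comp, C_comp,
        neg_apply, sub_apply, one_apply_eq, map_sub, map_one]
      ring
    · simp [h]
  rw [charpoly, charpoly, ← coe_compRingHom_apply, RingHom.map_det, RingHom.mapMatrix_apply, hmap,
    det_neg, ← mul_assoc, ← pow_add, Even.neg_one_pow ⟨_, rfl⟩, one_mul]

theorem charpoly_one_sub_mul_comm_of_le (A : Matrix m n R) (B : Matrix n m R)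
    (hle : Fintype.card n ≤ Fintype.card m) :
    (1 - A * B).charpoly = (X - 1) ^ (Fintype.card m - Fintype.card n) * (1 - B * A).charpoly := by
  obtain ⟨d, hd⟩ := Nat.exists_eq_add_of_le' hle
  have hsign : (1 - X : R[X]) ^ d = (-1) ^ d * (X - 1) ^ d := by rw [← mul_pow]; ring
  have hsq : (-1 : R[X]) ^ d * (-1) ^ d = 1 := by rw [← pow_add]; exact Even.neg_one_pow ⟨d, rfl⟩
  rw [charpoly_one_sub, charpoly_one_sub, charpoly_mul_comm_of_le A B hle, mul_comp, pow_comp,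
    X_comp, hd, Nat.add_sub_cancel, pow_add, hsign]
  linear_combination (X - 1) ^ d * (-1) ^ Fintype.card n * (B * A).charpoly.comp (1 - X) * hsq

end Matrix

theorem charpoly_conjTranspose_mul_self_factorization_of_unitary_blocks_general
    (n k : ℕ) (hk2 : k ≤ n - 1) (hkge : n - k ≤ k)
    (X : Matrix (Fin (n - k)) (Fin k) ℂ) (Y : Matrix (Fin (n - k)) (Fin (n - k)) ℂ)
    (Z : Matrix (Fin k) (Fin k) ℂ) (V : Matrix (Fin k) (Fin (n - k)) ℂ)
    (hU₁ : (Matrix.fromBlocks X Y Z V)ᴴ * Matrix.fromBlocks X Y Z V = 1)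
    (hU₂ : Matrix.fromBlocks X Y Z V * (Matrix.fromBlocks X Y Z V)ᴴ = 1) :
    (Zᴴ * Z).charpoly = (Polynomial.X - 1) ^ (2 * k - n) * (Y * Yᴴ).charpoly ∧
      2 * k - n ≤ (Zᴴ * Z).charpoly.rootMultiplicity 1 := by
  rw [fromBlocks_conjTranspose, fromBlocks_multiply, ← fromBlocks_one, fromBlocks_inj]
    at hU₁ hU₂
  have hZ : Zᴴ * Z = 1 - Xᴴ * X := eq_sub_of_add_eq' hU₁.1
  have hY : Y * Yᴴ = 1 - X * Xᴴ := eq_sub_of_add_eq' hU₂.1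
  have hfactor : (Zᴴ * Z).charpoly = (Polynomial.X - 1) ^ (2 * k - n) * (Y * Yᴴ).charpoly := by
    have hle : Fintype.card (Fin (n - k)) ≤ Fintype.card (Fin k) := by simpa using hkge
    rw [hZ, hY, charpoly_one_sub_mul_comm_of_le Xᴴ X hle, Fintype.card_fin, Fintype.card_fin,
      show 2 * k - n = k - (n - k) by omega]
  refine ⟨hfactor, ?_⟩
  rw [le_rootMultiplicity_iff (charpoly_monic _).ne_zero, hfactor, C_1]
  exact dvd_mul_right _ _

/-- For a block-decomposed unitary matrix `U = [[X, Y], [Z, V]]` with `k ≥ n - k`, the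
characteristic polynomial of `ZᴴZ` factors as `(t - 1)^(2k - n) · charpoly(Y Yᴴ)`;
in particular `1` is a root of `charpoly(ZᴴZ)` of multiplicity at least `2k - n`. -/
theorem charpoly_conjTranspose_mul_self_factorization_of_unitary_blocks
    (n k : ℕ) (hn : 2 ≤ n) (hk1 : 1 ≤ k) (hk2 : k ≤ n - 1) (hkge : n - k ≤ k)
    (X : Matrix (Fin (n - k)) (Fin k) ℂ) (Y : Matrix (Fin (n - k)) (Fin (n - k)) ℂ)
    (Z : Matrix (Fin k) (Fin k) ℂ) (V : Matrix (Fin k) (Fin (n - k)) ℂ)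
    (hU₁ : (Matrix.fromBlocks X Y Z V)ᴴ * Matrix.fromBlocks X Y Z V = 1)
    (hU₂ : Matrix.fromBlocks X Y Z V * (Matrix.fromBlocks X Y Z V)ᴴ = 1) :
    (Zᴴ * Z).charpoly = (Polynomial.X - 1) ^ (2 * k - n) * (Y * Yᴴ).charpoly ∧
      2 * k - n ≤ (Zᴴ * Z).charpoly.rootMultiplicity 1 :=
  charpoly_conjTranspose_mul_self_factorization_of_unitary_blocks_general n k hk2 hkge X Y Z V hU₁
    hU₂
end

section
/- Let n ≥ 2 and 1 ≤ k ≤ n−1 with 2k > n, and let U ∈ U(n) be a unitary matrix written in block form U = [[X, Y], [Z, V]] with X ∈ ℂ^{(n−k)×k}, Y ∈ ℂ^{(n−k)×(n−k)}, Z ∈ ℂ^{k×k}, V ∈ ℂ^{k×(n−k)}. Then the spectrum (set of eigenvalues in ℂ) of ZᴴZ equals the union of the spectrum of Y Yᴴ with the singleton {1}. -/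
/-!
Unitarity of `U` gives `ZᴴZ = 1 - XᴴX` and `YYᴴ = 1 - XXᴴ`. The characteristic polynomials of
`XᴴX` (size `k`) and `XXᴴ` (size `n - k < k`) differ by the factor `t ^ (2k - n)`, so
`σ(XᴴX) = σ(XXᴴ) ∪ {0}`, and `μ ↦ 1 - μ` carries this to the claim.
-/

open Matrix

namespace Matrix

variable {l m n o α K : Type*} [Fintype m] [Fintype n]

theorem conjTranspose_mul_self_add_eq_one_of_fromBlocks [Semiring α] [Star α]
    {A : Matrix m l α} {B : Matrix m o α} {C : Matrix n l α} {D : Matrix n o α}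
    [DecidableEq l] [DecidableEq o]
    (h : (fromBlocks A B C D)ᴴ * fromBlocks A B C D = 1) : Aᴴ * A + Cᴴ * C = 1 := by
  rw [fromBlocks_conjTranspose, fromBlocks_multiply, ← fromBlocks_one] at h
  exact congrArg toBlocks₁₁ h

theorem mul_conjTranspose_self_add_eq_one_of_fromBlocks [Semiring α] [Star α]
    {A : Matrix l m α} {B : Matrix l n α} {C : Matrix o m α} {D : Matrix o n α}
    [DecidableEq l] [DecidableEq o]
    (h : fromBlocks A B C D * (fromBlocks A B C D)ᴴ = 1) : A * Aᴴ + B * Bᴴ = 1 := by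
  rw [fromBlocks_conjTranspose, fromBlocks_multiply, ← fromBlocks_one] at h
  exact congrArg toBlocks₁₁ h

theorem spectrum_mul_comm_of_card_lt [DecidableEq m] [DecidableEq n] [Field K]
    (A : Matrix m n K) (B : Matrix n m K) (h : Fintype.card n < Fintype.card m) :
    spectrum K (A * B) = insert 0 (spectrum K (B * A)) := by
  ext μ
  simp [mem_spectrum_iff_isRoot_charpoly, charpoly_mul_comm_of_le A B h.le,
    Nat.sub_ne_zero_of_lt h]

end Matrix

open scoped Pointwise in
theorem spectrum.one_sub_eq {R A : Type*} [CommRing R] [Ring A] [Algebra R A] (a : A) :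
    spectrum R (1 - a) = ({1} : Set R) - spectrum R a := by
  rw [spectrum.singleton_sub_eq, map_one]

theorem spectrum_conjTranspose_mul_self_of_unitary_blocks_general
    (n k : ℕ) (hkge : n < 2 * k)
    (X : Matrix (Fin (n - k)) (Fin k) ℂ) (Y : Matrix (Fin (n - k)) (Fin (n - k)) ℂ)
    (Z : Matrix (Fin k) (Fin k) ℂ) (V : Matrix (Fin k) (Fin (n - k)) ℂ)
    (hU₁ : (Matrix.fromBlocks X Y Z V)ᴴ * Matrix.fromBlocks X Y Z V = 1)
    (hU₂ : Matrix.fromBlocks X Y Z V * (Matrix.fromBlocks X Y Z V)ᴴ = 1) :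
    spectrum ℂ (Zᴴ * Z) = spectrum ℂ (Y * Yᴴ) ∪ {1} := by
  have hZ : Zᴴ * Z = 1 - Xᴴ * X :=
    eq_sub_of_add_eq' (conjTranspose_mul_self_add_eq_one_of_fromBlocks hU₁)
  have hY : Y * Yᴴ = 1 - X * Xᴴ :=
    eq_sub_of_add_eq' (mul_conjTranspose_self_add_eq_one_of_fromBlocks hU₂)
  have hX : spectrum ℂ (Xᴴ * X) = insert 0 (spectrum ℂ (X * Xᴴ)) :=
    spectrum_mul_comm_of_card_lt Xᴴ X (by simp only [Fintype.card_fin]; omega)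
  rw [hZ, hY, spectrum.one_sub_eq, spectrum.one_sub_eq, hX, Set.insert_eq,
    Set.sub_union, Set.singleton_sub_singleton, sub_zero, Set.union_comm]

/-- For a block-decomposed unitary matrix `U = [[X, Y], [Z, V]]` with `2k > n`, the spectrum
of `ZᴴZ` is the union of the spectrum of `Y Yᴴ` with `{1}`. -/
theorem spectrum_conjTranspose_mul_self_of_unitary_blocks
    (n k : ℕ) (hn : 2 ≤ n) (hk1 : 1 ≤ k) (hk2 : k ≤ n - 1) (hkge : n < 2 * k)
    (X : Matrix (Fin (n - k)) (Fin k) ℂ) (Y : Matrix (Fin (n - k)) (Fin (n - k)) ℂ)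
    (Z : Matrix (Fin k) (Fin k) ℂ) (V : Matrix (Fin k) (Fin (n - k)) ℂ)
    (hU₁ : (Matrix.fromBlocks X Y Z V)ᴴ * Matrix.fromBlocks X Y Z V = 1)
    (hU₂ : Matrix.fromBlocks X Y Z V * (Matrix.fromBlocks X Y Z V)ᴴ = 1) :
    spectrum ℂ (Zᴴ * Z) = spectrum ℂ (Y * Yᴴ) ∪ {1} :=
  spectrum_conjTranspose_mul_self_of_unitary_blocks_general n k hkge X Y Z V hU₁ hU₂
end

section
/- Let 1 ≤ k ≤ n−1, let X ∈ ℂ^{(n−k)×k} and Z ∈ ℂ^{k×k} with XᴴX + ZᴴZ = I_k and Z invertible. Set w = X Z⁻¹ and Θ = ((Z Zᴴ)^{1/2})⁻¹ Z ∈ U(k). Then (I_k + wᴴw)^{1/2} = ((Z Zᴴ)^{1/2})⁻¹, and consequently the frame (X; Z) admits the decomposition X = w (I_k + wᴴw)^{−1/2} Θ and Z = (I_k + wᴴw)^{−1/2} Θ, where (I_k + wᴴw)^{−1/2} denotes the inverse of the positive semidefinite square root of I_k + wᴴw. -/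
open Matrix
open scoped ComplexOrder

/-- The positive semidefinite square root of a positive semidefinite matrix
(Mathlib's former `Matrix.PosSemidef.sqrt`, removed since; restored with its old definition). -/
noncomputable def Matrix.PosSemidef.sqrt {n 𝕜 : Type*} [Fintype n] [RCLike 𝕜] [DecidableEq n]
    {A : Matrix n n 𝕜} (hA : A.PosSemidef) : Matrix n n 𝕜 :=
  hA.1.eigenvectorUnitary.1 * diagonal ((↑) ∘ (√·) ∘ hA.1.eigenvalues) *
    (star hA.1.eigenvectorUnitary : Matrix n n 𝕜)

/-!
Writing `X = w Z`, the frame condition `XᴴX + ZᴴZ = 1` becomes `Zᴴ (1 + wᴴw) Z = 1`, i.e.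
`1 + wᴴw = (Z Zᴴ)⁻¹`. Taking square roots, `(1 + wᴴw)^{1/2} = S⁻¹` with `S = (Z Zᴴ)^{1/2}`,
and `S⁻¹ Z` is unitary since `(S⁻¹ Z)(S⁻¹ Z)ᴴ = S⁻¹ S² S⁻¹ = 1`. The decomposition of the frame
is then `X = w S (S⁻¹ Z)` and `Z = S (S⁻¹ Z)`.
-/

namespace Matrix

section Frame

variable {m n R : Type*} [Fintype n] [DecidableEq n] [CommRing R] [StarRing R]

theorem one_add_conjTranspose_mul_self_mul_inv {X : Matrix m n R} {Z : Matrix n n R}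
    [Fintype m] (hframe : Xᴴ * X + Zᴴ * Z = 1) (hZ : IsUnit Z.det) :
    1 + (X * Z⁻¹)ᴴ * (X * Z⁻¹) = (Z * Zᴴ)⁻¹ := by
  have hZH : IsUnit Zᴴ.det := by rw [det_conjTranspose]; exact hZ.star
  have hXX : Xᴴ * X = 1 - Zᴴ * Z := eq_sub_of_add_eq hframe
  rw [conjTranspose_mul, conjTranspose_nonsing_inv, mul_inv_rev]
  calc 1 + Zᴴ⁻¹ * Xᴴ * (X * Z⁻¹)
      = 1 + Zᴴ⁻¹ * (Xᴴ * X) * Z⁻¹ := by simp only [Matrix.mul_assoc]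
    _ = 1 + Zᴴ⁻¹ * Z⁻¹ - Zᴴ⁻¹ * Zᴴ * (Z * Z⁻¹) := by rw [hXX]; noncomm_ring
    _ = Zᴴ⁻¹ * Z⁻¹ := by rw [nonsing_inv_mul _ hZH, mul_nonsing_inv _ hZ, mul_one]; abel

theorem inv_mul_mem_unitaryGroup_of_mul_self_eq {S Z : Matrix n n R} (hS : S.IsHermitian)
    (hSZ : S * S = Z * Zᴴ) (hSdet : IsUnit S.det) : S⁻¹ * Z ∈ unitaryGroup n R := by
  rw [mem_unitaryGroup_iff, star_eq_conjTranspose, conjTranspose_mul, conjTranspose_nonsing_inv,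
    hS.eq]
  calc S⁻¹ * Z * (Zᴴ * S⁻¹) = S⁻¹ * (S * S) * S⁻¹ := by rw [hSZ]; noncomm_ring
    _ = (S⁻¹ * S) * (S * S⁻¹) := by noncomm_ring
    _ = 1 := by rw [nonsing_inv_mul _ hSdet, mul_nonsing_inv _ hSdet, one_mul]

end Frame

namespace PosSemidef

variable {n 𝕜 : Type*} [Fintype n] [RCLike 𝕜] [DecidableEq n]

open scoped MatrixOrder in
theorem sqrt_eq_cfcSqrt {A : Matrix n n 𝕜} (hA : A.PosSemidef) : hA.sqrt = CFC.sqrt A := by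
  rw [CFC.sqrt_eq_cfc, cfc_nnreal_eq_real _ A, hA.1.cfc_eq]
  simp only [IsHermitian.cfc, sqrt, Real.coe_sqrt, Real.coe_toNNReal',
    Unitary.conjStarAlgAut_apply]
  congr 3
  funext i
  simp [max_eq_left (hA.eigenvalues_nonneg i)]

open scoped MatrixOrder in
theorem sqrt_mul_self {A : Matrix n n 𝕜} (hA : A.PosSemidef) : hA.sqrt * hA.sqrt = A := by
  rw [hA.sqrt_eq_cfcSqrt]; exact CFC.sqrt_mul_sqrt_self A hA.nonneg

open scoped MatrixOrder in
theorem posSemidef_sqrt {A : Matrix n n 𝕜} (hA : A.PosSemidef) : hA.sqrt.PosSemidef := by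
  rw [hA.sqrt_eq_cfcSqrt]; exact (CFC.sqrt_nonneg A).posSemidef

open scoped MatrixOrder in
theorem eq_sqrt_of_sq_eq {A B : Matrix n n 𝕜} (hA : A.PosSemidef) (hB : B.PosSemidef)
    (hAB : A ^ 2 = B) : A = hB.sqrt := by
  rw [hB.sqrt_eq_cfcSqrt, ← hAB, sq]; exact (CFC.sqrt_mul_self A hA.nonneg).symm

theorem isUnit_det_sqrt {A : Matrix n n 𝕜} (hA : A.PosSemidef) (hdet : IsUnit A.det) :
    IsUnit hA.sqrt.det :=
  isUnit_of_mul_isUnit_left (by rwa [← det_mul, hA.sqrt_mul_self])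

theorem sqrt_eq_inv_sqrt_of_eq_inv {A B : Matrix n n 𝕜} (hA : A.PosSemidef) (hB : B.PosSemidef)
    (hAB : A = B⁻¹) : hA.sqrt = hB.sqrt⁻¹ := by
  refine (eq_sqrt_of_sq_eq hB.posSemidef_sqrt.inv hA ?_).symm
  rw [sq, ← mul_inv_rev, hB.sqrt_mul_self, hAB]

end PosSemidef

end Matrix

theorem stiefel_frame_decomposition_general
    (n k : ℕ)
    (X : Matrix (Fin (n - k)) (Fin k) ℂ) (Z : Matrix (Fin k) (Fin k) ℂ)
    (hframe : Xᴴ * X + Zᴴ * Z = 1) (hZ : IsUnit Z.det)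
    (w : Matrix (Fin (n - k)) (Fin k) ℂ) (hw : w = X * Z⁻¹) :
    ∀ (h₁ : (1 + wᴴ * w).PosSemidef) (h₂ : (Z * Zᴴ).PosSemidef),
      h₂.sqrt⁻¹ * Z ∈ Matrix.unitaryGroup (Fin k) ℂ ∧
      h₁.sqrt = h₂.sqrt⁻¹ ∧
      X = w * h₁.sqrt⁻¹ * (h₂.sqrt⁻¹ * Z) ∧
      Z = h₁.sqrt⁻¹ * (h₂.sqrt⁻¹ * Z) := by
  intro h₁ h₂
  set S := h₂.sqrt
  have hSdet : IsUnit S.det :=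
    h₂.isUnit_det_sqrt (by rw [det_mul, det_conjTranspose]; exact hZ.mul hZ.star)
  have hsqrt : h₁.sqrt = S⁻¹ :=
    h₁.sqrt_eq_inv_sqrt_of_eq_inv h₂ (hw ▸ one_add_conjTranspose_mul_self_mul_inv hframe hZ)
  have hSS : S * S⁻¹ = 1 := mul_nonsing_inv _ hSdet
  refine ⟨inv_mul_mem_unitaryGroup_of_mul_self_eq h₂.posSemidef_sqrt.isHermitian
    h₂.sqrt_mul_self hSdet, hsqrt, ?_, ?_⟩ <;> rw [hsqrt, nonsing_inv_nonsing_inv _ hSdet]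
  · rw [← Matrix.mul_assoc, Matrix.mul_assoc w, hSS, Matrix.mul_one, hw, Matrix.mul_assoc,
      nonsing_inv_mul _ hZ, Matrix.mul_one]
  · rw [← Matrix.mul_assoc, hSS, Matrix.one_mul]

/-- For a Stiefel frame `(X; Z)` with `Z` invertible, `w = X Z⁻¹` and
`Θ = ((Z Zᴴ)^{1/2})⁻¹ Z`, one has `(I_k + wᴴw)^{1/2} = ((Z Zᴴ)^{1/2})⁻¹`, and the frame
decomposes as `X = w (I_k + wᴴw)^{−1/2} Θ`, `Z = (I_k + wᴴw)^{−1/2} Θ`. -/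
theorem stiefel_frame_decomposition
    (n k : ℕ) (hk1 : 1 ≤ k) (hk2 : k ≤ n - 1)
    (X : Matrix (Fin (n - k)) (Fin k) ℂ) (Z : Matrix (Fin k) (Fin k) ℂ)
    (hframe : Xᴴ * X + Zᴴ * Z = 1) (hZ : IsUnit Z.det)
    (w : Matrix (Fin (n - k)) (Fin k) ℂ) (hw : w = X * Z⁻¹) :
    ∀ (h₁ : (1 + wᴴ * w).PosSemidef) (h₂ : (Z * Zᴴ).PosSemidef),
      h₂.sqrt⁻¹ * Z ∈ Matrix.unitaryGroup (Fin k) ℂ ∧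
      h₁.sqrt = h₂.sqrt⁻¹ ∧
      X = w * h₁.sqrt⁻¹ * (h₂.sqrt⁻¹ * Z) ∧
      Z = h₁.sqrt⁻¹ * (h₂.sqrt⁻¹ * Z) :=
  stiefel_frame_decomposition_general n k X Z hframe hZ w hw
end

section
/- Fix n ≥ 2 and 1 ≤ k ≤ (n−k). On ℝ^k define, for smooth functions f, the operators L_{n,k} f = 2 Σ_{i=1}^k (1−ρ_i²) ∂_i² f − 2 Σ_{i=1}^k ( n−2k + (n−2k+2)ρ_i + 2 Σ_{ℓ≠i} (1−ρ_i²)/(ρ_ℓ−ρ_i) ) ∂_i f and, for parameters a,b, 𝒢_{a,b} f = Σ_{i=1}^k (1−ρ_i²) ∂_i² f − Σ_{i=1}^k ( a − b + (a+b+2)ρ_i ) ∂_i f, and let h(ρ) = Π_{i>j} (ρ_i − ρ_j) be the Vandermonde function. Then at every point ρ ∈ (−1,1)^k with pairwise distinct coordinates and for every smooth function f, L_{n,k} f = 2 ( (1/h) 𝒢_{n−2k, 0}(h f) + (1/6) k(k−1)(3n−4k+2) f ). -/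
open Finset

/-- Partial derivative in the `i`-th coordinate on `ℝ^k`. -/
noncomputable def pder {k : ℕ} (f : (Fin k → ℝ) → ℝ) (i : Fin k) : (Fin k → ℝ) → ℝ :=
  fun ρ => fderiv ℝ f ρ (Pi.single i 1)

/-- The generator `L_{n,k}` of the eigenvalue process of `2ZZᴴ − I_k`. -/
noncomputable def genL (n k : ℕ) (f : (Fin k → ℝ) → ℝ) : (Fin k → ℝ) → ℝ :=
  fun ρ =>
    2 * ∑ i : Fin k, (1 - ρ i ^ 2) * pder (pder f i) i ρ -
      2 * ∑ i : Fin k,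
        (((n : ℝ) - 2 * k) + ((n : ℝ) - 2 * k + 2) * ρ i +
            2 * ∑ ℓ ∈ Finset.univ.erase i, (1 - ρ i ^ 2) / (ρ ℓ - ρ i)) * pder f i ρ

/-- The sum `𝒢_{a,b}` of `k` independent one-dimensional Jacobi diffusion generators. -/
noncomputable def genG {k : ℕ} (a b : ℝ) (f : (Fin k → ℝ) → ℝ) : (Fin k → ℝ) → ℝ :=
  fun ρ =>
    ∑ i : Fin k, (1 - ρ i ^ 2) * pder (pder f i) i ρ -
      ∑ i : Fin k, (a - b + (a + b + 2) * ρ i) * pder f i ρ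

/-- The Vandermonde function `h(ρ) = Π_{i>j} (ρ_i − ρ_j)`. -/
def vdm {k : ℕ} (ρ : Fin k → ℝ) : ℝ :=
  ∏ i : Fin k, ∏ j ∈ Finset.univ.filter (· < i), (ρ i - ρ j)

-- coordinate projection as CLM
noncomputable def cproj {k : ℕ} (a : Fin k) : (Fin k → ℝ) →L[ℝ] ℝ :=
  ContinuousLinearMap.proj a

lemma cproj_apply {k : ℕ} (a : Fin k) (x : Fin k → ℝ) : cproj a x = x a := rfl

lemma hasFDerivAt_coord_sub {k : ℕ} (a b : Fin k) (x : Fin k → ℝ) :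
    HasFDerivAt (fun y : Fin k → ℝ => y a - y b) (cproj a - cproj b) x :=
  ((ContinuousLinearMap.hasFDerivAt (cproj a)).sub (ContinuousLinearMap.hasFDerivAt (cproj b)))

lemma cproj_single {k : ℕ} (a i : Fin k) :
    cproj a (Pi.single i (1:ℝ)) = if a = i then 1 else 0 := by
  simp [cproj_apply, Pi.single_apply]

lemma contDiff_coord_sub {k : ℕ} (a b : Fin k) :
    ContDiff ℝ (⊤ : ℕ∞) (fun y : Fin k → ℝ => y a - y b) :=
  ((cproj a).contDiff).sub ((cproj b).contDiff)

lemma contDiff_pder {k : ℕ} {f : (Fin k → ℝ) → ℝ} (hf : ContDiff ℝ (⊤ : ℕ∞) f) (i : Fin k) :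
    ContDiff ℝ (⊤ : ℕ∞) (pder f i) :=
  (hf.fderiv_right (by simp)).clm_apply contDiff_const

lemma pder_mul {k : ℕ} {g f : (Fin k → ℝ) → ℝ} {x : Fin k → ℝ}
    (hg : DifferentiableAt ℝ g x) (hf : DifferentiableAt ℝ f x) (i : Fin k) :
    pder (fun y => g y * f y) i x = pder g i x * f x + g x * pder f i x := by
  unfold pder
  rw [fderiv_fun_mul hg hf]
  simp only [ContinuousLinearMap.add_apply, ContinuousLinearMap.smul_apply, smul_eq_mul]
  ring

/-- the index finset of pairs (i,j) with j < i -/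
def Pk (k : ℕ) : Finset ((_ : Fin k) × Fin k) :=
  Finset.univ.sigma (fun i => Finset.univ.filter (· < i))

lemma vdm_eq_prod {k : ℕ} (x : Fin k → ℝ) : vdm x = ∏ p ∈ Pk k, (x p.1 - x p.2) := by
  rw [vdm, Pk, Finset.prod_sigma]

lemma mem_Pk {k : ℕ} {p : (_ : Fin k) × Fin k} : p ∈ Pk k ↔ p.2 < p.1 := by
  simp [Pk]

lemma vdm_ne_zero {k : ℕ} {x : Fin k → ℝ} (hx : Function.Injective x) : vdm x ≠ 0 := by
  rw [vdm_eq_prod]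
  refine Finset.prod_ne_zero_iff.2 fun p hp => sub_ne_zero.2 (fun h => ?_)
  exact absurd (hx h) (ne_of_gt (mem_Pk.1 hp))

lemma contDiff_vdm {k : ℕ} : ContDiff ℝ (⊤ : ℕ∞) (vdm (k := k)) := by
  have : vdm (k := k) = fun x => ∏ p ∈ Pk k, (x p.1 - x p.2) := funext vdm_eq_prod
  rw [this]
  exact contDiff_prod fun p _ => contDiff_coord_sub p.1 p.2

noncomputable def Sfun {k : ℕ} (i : Fin k) (x : Fin k → ℝ) : ℝ :=
  ∑ ℓ ∈ Finset.univ.erase i, (x i - x ℓ)⁻¹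

noncomputable def Tfun {k : ℕ} (i : Fin k) (x : Fin k → ℝ) : ℝ :=
  ∑ ℓ ∈ Finset.univ.erase i, ((x i - x ℓ) ^ 2)⁻¹

/-- splitting a sum over `univ.erase i` into the `< i` and `> i` parts -/
lemma sum_erase_split {k : ℕ} (i : Fin k) (F : Fin k → ℝ) :
    ∑ ℓ ∈ Finset.univ.erase i, F ℓ =
      (∑ ℓ ∈ Finset.univ.filter (· < i), F ℓ) + ∑ ℓ ∈ Finset.univ.filter (i < ·), F ℓ := by
  rw [← Finset.filter_ne' Finset.univ i, Finset.sum_filter, Finset.sum_filter,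
    Finset.sum_filter, ← Finset.sum_add_distrib]
  refine Finset.sum_congr rfl fun ℓ _ => ?_
  rcases lt_trichotomy ℓ i with h | h | h
  · simp [h, ne_of_lt h, not_lt_of_gt h]
  · simp [h]
  · simp [h, (ne_of_gt h), not_lt_of_gt h]

lemma pder_vdm {k : ℕ} {x : Fin k → ℝ} (hx : Function.Injective x) (i : Fin k) :
    pder vdm i x = vdm x * Sfun i x := by
  have hdiff : HasFDerivAt (vdm (k := k))
      (∑ p ∈ Pk k, (∏ q ∈ (Pk k).erase p, (x q.1 - x q.2)) • (cproj p.1 - cproj p.2)) x := by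
    have h : HasFDerivAt (fun y : Fin k → ℝ => ∏ p ∈ Pk k, (y p.1 - y p.2))
        (∑ p ∈ Pk k, (∏ q ∈ (Pk k).erase p, (x q.1 - x q.2)) • (cproj p.1 - cproj p.2)) x := by
      simpa using HasFDerivAt.finset_prod (u := Pk k)
        (g := fun p (y : Fin k → ℝ) => y p.1 - y p.2)
        (g' := fun p => cproj p.1 - cproj p.2) (x := x)
        (fun p _ => hasFDerivAt_coord_sub p.1 p.2 x)
    have he : (fun y : Fin k → ℝ => ∏ p ∈ Pk k, (y p.1 - y p.2)) = vdm (k := k) :=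
      funext fun y => (vdm_eq_prod y).symm
    rwa [he] at h
  rw [pder, hdiff.fderiv]
  rw [ContinuousLinearMap.sum_apply]
  have hterm : ∀ p ∈ Pk k,
      ((∏ q ∈ (Pk k).erase p, (x q.1 - x q.2)) • (cproj p.1 - cproj p.2)) (Pi.single i 1)
        = vdm x * ((if p.1 = i then (x i - x p.2)⁻¹ else 0)
            + (if p.2 = i then (x i - x p.1)⁻¹ else 0)) := by
    intro p hp
    have hlt : p.2 < p.1 := mem_Pk.1 hp
    have hne : x p.1 - x p.2 ≠ 0 := sub_ne_zero.2 fun h => absurd (hx h) (ne_of_gt hlt)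
    have hprod : (∏ q ∈ (Pk k).erase p, (x q.1 - x q.2)) = vdm x * (x p.1 - x p.2)⁻¹ := by
      have h2 : (∏ q ∈ (Pk k).erase p, (x q.1 - x q.2)) * (x p.1 - x p.2) = vdm x := by
        simpa using Finset.prod_erase_mul (Pk k) (fun q => (x q.1 - x q.2)) hp
          |>.trans (vdm_eq_prod x).symm
      rw [← h2, mul_assoc, mul_inv_cancel₀ hne, mul_one]
    rw [ContinuousLinearMap.smul_apply, ContinuousLinearMap.sub_apply, cproj_single,
      cproj_single, hprod]
    by_cases h1 : p.1 = i
    · have h2 : ¬ p.2 = i := fun h => absurd (h1 ▸ h ▸ hlt) (lt_irrefl _)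
      subst h1
      simp only [smul_eq_mul, if_neg h2, if_true, eq_self_iff_true]
      ring
    · by_cases h2 : p.2 = i
      · subst h2
        simp only [smul_eq_mul, if_neg h1, if_true, eq_self_iff_true]
        rw [show (x p.1 - x p.2)⁻¹ = -(x p.2 - x p.1)⁻¹ by rw [← inv_neg, neg_sub]]
        ring
      · simp [if_neg h1, if_neg h2]
  rw [Finset.sum_congr rfl hterm, ← Finset.mul_sum]
  congr 1
  rw [Finset.sum_add_distrib]
  have hfst : (∑ p ∈ Pk k, if p.1 = i then (x i - x p.2)⁻¹ else 0)
      = ∑ ℓ ∈ Finset.univ.filter (· < i), (x i - x ℓ)⁻¹ := by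
    rw [Pk, Finset.sum_sigma]
    rw [Finset.sum_eq_single i
      (fun a _ ha => Finset.sum_eq_zero fun j _ => if_neg ha)
      (fun h => absurd (Finset.mem_univ i) h)]
    exact Finset.sum_congr rfl fun j _ => if_pos rfl
  have hsnd : (∑ p ∈ Pk k, if p.2 = i then (x i - x p.1)⁻¹ else 0)
      = ∑ ℓ ∈ Finset.univ.filter (i < ·), (x i - x ℓ)⁻¹ := by
    rw [Pk, Finset.sum_sigma]
    rw [Finset.sum_filter]
    refine Finset.sum_congr rfl fun a _ => ?_
    rw [Finset.sum_ite_eq' (Finset.univ.filter (· < a)) i (fun _ => (x i - x a)⁻¹)]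
    simp only [Finset.mem_filter, Finset.mem_univ, true_and]
  rw [hfst, hsnd, Sfun, sum_erase_split]

lemma isOpen_inj {k : ℕ} : IsOpen {x : Fin k → ℝ | Function.Injective x} := by
  have : {x : Fin k → ℝ | Function.Injective x} =
      ⋂ p ∈ {q : Fin k × Fin k | q.1 ≠ q.2}, {x : Fin k → ℝ | x p.1 - x p.2 ≠ 0} := by
    ext x
    simp only [Set.mem_setOf_eq, Set.mem_iInter, sub_ne_zero]
    constructor
    · exact fun h p hp => fun he => hp (h he)
    · intro h a b hab
      by_contra hne
      exact h (a, b) hne hab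
  rw [this]
  refine Set.Finite.isOpen_biInter (Set.toFinite _) fun p _ => ?_
  exact isOpen_compl_singleton.preimage ((continuous_apply p.1).sub (continuous_apply p.2))

lemma eventually_inj {k : ℕ} {ρ : Fin k → ℝ} (hρ : Function.Injective ρ) :
    ∀ᶠ x in nhds ρ, Function.Injective x :=
  isOpen_inj.mem_nhds hρ

lemma differentiableAt_Sfun {k : ℕ} {ρ : Fin k → ℝ} (hρ : Function.Injective ρ) (i : Fin k) :
    DifferentiableAt ℝ (Sfun i) ρ := by
  apply DifferentiableAt.fun_sum
  intro ℓ hℓ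
  have hne : ρ i - ρ ℓ ≠ 0 :=
    sub_ne_zero.2 fun h => (Finset.ne_of_mem_erase hℓ) (hρ h).symm
  exact ((hasFDerivAt_coord_sub i ℓ ρ).differentiableAt).inv hne

lemma pder_Sfun {k : ℕ} {ρ : Fin k → ℝ} (hρ : Function.Injective ρ) (i : Fin k) :
    pder (Sfun i) i ρ = -Tfun i ρ := by
  unfold Sfun Tfun pder
  rw [fderiv_fun_sum (fun ℓ hℓ => by
    have hne : ρ i - ρ ℓ ≠ 0 :=
      sub_ne_zero.2 fun h => (Finset.ne_of_mem_erase hℓ) (hρ h).symm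
    exact ((hasFDerivAt_coord_sub i ℓ ρ).differentiableAt).inv hne)]
  rw [ContinuousLinearMap.sum_apply, ← Finset.sum_neg_distrib]
  refine Finset.sum_congr rfl fun ℓ hℓ => ?_
  have hℓi : ℓ ≠ i := Finset.ne_of_mem_erase hℓ
  have hne : ρ i - ρ ℓ ≠ 0 := sub_ne_zero.2 fun h => hℓi (hρ h).symm
  have hc : HasFDerivAt (fun y : Fin k → ℝ => (y i - y ℓ)⁻¹)
      (-(((ρ i - ρ ℓ) ^ 2)⁻¹) • (cproj i - cproj ℓ)) ρ := by
    have hcomp := ((differentiableAt_inv hne).hasFDerivAt).comp ρ (hasFDerivAt_coord_sub i ℓ ρ)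
    rw [fderiv_inv] at hcomp
    refine hcomp.congr_fderiv ?_
    ext v
    simp [mul_comm]
    ring
  rw [hc.fderiv]
  rw [ContinuousLinearMap.smul_apply, ContinuousLinearMap.sub_apply, cproj_single, cproj_single,
    if_pos rfl, if_neg hℓi]
  simp

lemma pder_add {k : ℕ} {g f : (Fin k → ℝ) → ℝ} {x : Fin k → ℝ}
    (hg : DifferentiableAt ℝ g x) (hf : DifferentiableAt ℝ f x) (i : Fin k) :
    pder (fun y => g y + f y) i x = pder g i x + pder f i x := by
  unfold pder
  rw [fderiv_fun_add hg hf, ContinuousLinearMap.add_apply]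

lemma pder2_vdm {k : ℕ} {ρ : Fin k → ℝ} (hρ : Function.Injective ρ) (i : Fin k) :
    pder (pder vdm i) i ρ = vdm ρ * ((Sfun i ρ) ^ 2 - Tfun i ρ) := by
  have hev : pder vdm i =ᶠ[nhds ρ] fun x => vdm x * Sfun i x :=
    (eventually_inj hρ).mono fun x hx => pder_vdm hx i
  have h1 : pder (pder vdm i) i ρ = pder (fun x => vdm x * Sfun i x) i ρ := by
    have h2 : fderiv ℝ (pder vdm i) ρ = fderiv ℝ (fun x => vdm x * Sfun i x) ρ :=
      hev.fderiv_eq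
    show fderiv ℝ (pder vdm i) ρ (Pi.single i 1) = _
    rw [h2]
    rfl
  rw [h1, pder_mul (contDiff_vdm.differentiable (by simp) ρ) (differentiableAt_Sfun hρ i) i,
    pder_vdm hρ i, pder_Sfun hρ i]
  ring

lemma pder_prod_fun {k : ℕ} {f : (Fin k → ℝ) → ℝ} (hf : ContDiff ℝ (⊤ : ℕ∞) f) (i : Fin k) :
    pder (fun x => vdm x * f x) i =
      fun x => pder vdm i x * f x + vdm x * pder f i x :=
  funext fun x => pder_mul (contDiff_vdm.differentiable (by simp) x)
    (hf.differentiable (by simp) x) i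

lemma pder2_prod {k : ℕ} {ρ : Fin k → ℝ} (hρ : Function.Injective ρ)
    {f : (Fin k → ℝ) → ℝ} (hf : ContDiff ℝ (⊤ : ℕ∞) f) (i : Fin k) :
    pder (pder (fun x => vdm x * f x) i) i ρ =
      vdm ρ * ((Sfun i ρ) ^ 2 - Tfun i ρ) * f ρ +
        2 * (vdm ρ * Sfun i ρ) * pder f i ρ + vdm ρ * pder (pder f i) i ρ := by
  rw [pder_prod_fun hf i]
  have hdv : DifferentiableAt ℝ (pder vdm i) ρ :=
    ((contDiff_pder contDiff_vdm i).differentiable (by simp)) ρ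
  have hdf : DifferentiableAt ℝ (pder f i) ρ :=
    ((contDiff_pder hf i).differentiable (by simp)) ρ
  have hfρ : DifferentiableAt ℝ f ρ := hf.differentiable (by simp) ρ
  have hvρ : DifferentiableAt ℝ (vdm (k := k)) ρ := contDiff_vdm.differentiable (by simp) ρ
  rw [pder_add (hdv.fun_mul hfρ) (hvρ.fun_mul hdf) i, pder_mul hdv hfρ i, pder_mul hvρ hdf i,
    pder2_vdm hρ i, pder_vdm hρ i]
  ring

def PD (k : ℕ) : Finset (Fin k × Fin k) := Finset.univ.filter (fun p => p.2 ≠ p.1)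

def TD (k : ℕ) : Finset (Fin k × Fin k × Fin k) :=
  Finset.univ.filter (fun p => p.2.1 ≠ p.1 ∧ p.2.2 ≠ p.1 ∧ p.2.2 ≠ p.2.1)

lemma sum_pairs {k : ℕ} (g : Fin k → Fin k → ℝ) :
    ∑ i : Fin k, ∑ ℓ ∈ Finset.univ.erase i, g i ℓ = ∑ p ∈ PD k, g p.1 p.2 := by
  rw [PD, Finset.sum_filter, Fintype.sum_prod_type]
  refine Finset.sum_congr rfl fun i _ => ?_
  rw [← Finset.filter_ne' Finset.univ i, Finset.sum_filter]

lemma pair_swap {k : ℕ} (g : Fin k → Fin k → ℝ) :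
    ∑ p ∈ PD k, g p.1 p.2 = ∑ p ∈ PD k, g p.2 p.1 := by
  refine Finset.sum_nbij' (i := fun p => (p.2, p.1)) (j := fun p => (p.2, p.1)) ?_ ?_ ?_ ?_ ?_
  · intro p hp; simp only [PD, Finset.mem_filter, Finset.mem_univ, true_and] at *; exact hp.symm
  · intro p hp; simp only [PD, Finset.mem_filter, Finset.mem_univ, true_and] at *; exact hp.symm
  · intro p _; rfl
  · intro p _; rfl
  · intro p _; rfl

lemma card_PD_real {k : ℕ} : ∑ p ∈ PD k, (1 : ℝ) = (k : ℝ) * ((k : ℝ) - 1) := by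
  rw [← sum_pairs (g := fun _ _ => (1:ℝ))]
  simp only [Finset.sum_const, Finset.card_erase_of_mem (Finset.mem_univ _),
    Finset.card_univ, Fintype.card_fin, nsmul_eq_mul, mul_one]
  rcases k with _ | m
  · norm_num [Finset.univ_eq_empty]
  · push_cast [Nat.succ_sub_one]
    ring

lemma sum_Sfun {k : ℕ} {ρ : Fin k → ℝ} (hρ : Function.Injective ρ) :
    ∑ i : Fin k, Sfun i ρ = 0 := by
  have h : ∑ i : Fin k, Sfun i ρ = ∑ p ∈ PD k, (ρ p.1 - ρ p.2)⁻¹ :=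
    sum_pairs (g := fun i ℓ => (ρ i - ρ ℓ)⁻¹)
  have h2 : ∑ p ∈ PD k, (ρ p.1 - ρ p.2)⁻¹ = ∑ p ∈ PD k, (ρ p.2 - ρ p.1)⁻¹ :=
    pair_swap (g := fun i ℓ => (ρ i - ρ ℓ)⁻¹)
  have h3 : (∑ p ∈ PD k, (ρ p.1 - ρ p.2)⁻¹) + ∑ p ∈ PD k, (ρ p.2 - ρ p.1)⁻¹ = 0 := by
    rw [← Finset.sum_add_distrib]
    refine Finset.sum_eq_zero fun p _ => ?_
    rw [show (ρ p.2 - ρ p.1)⁻¹ = -(ρ p.1 - ρ p.2)⁻¹ by rw [← inv_neg, neg_sub]]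
    ring
  rw [h]
  linarith [h3, h2]

lemma sum_rhoS {k : ℕ} {ρ : Fin k → ℝ} (hρ : Function.Injective ρ) :
    ∑ i : Fin k, ρ i * Sfun i ρ = (k : ℝ) * ((k : ℝ) - 1) / 2 := by
  have h : ∑ i : Fin k, ρ i * Sfun i ρ = ∑ p ∈ PD k, ρ p.1 * (ρ p.1 - ρ p.2)⁻¹ := by
    rw [← sum_pairs (g := fun i ℓ => ρ i * (ρ i - ρ ℓ)⁻¹)]
    exact Finset.sum_congr rfl fun i _ => by rw [Sfun, Finset.mul_sum]
  have h2 : ∑ p ∈ PD k, ρ p.1 * (ρ p.1 - ρ p.2)⁻¹ = ∑ p ∈ PD k, ρ p.2 * (ρ p.2 - ρ p.1)⁻¹ :=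
    pair_swap (g := fun i ℓ => ρ i * (ρ i - ρ ℓ)⁻¹)
  have h3 : (∑ p ∈ PD k, ρ p.1 * (ρ p.1 - ρ p.2)⁻¹) + ∑ p ∈ PD k, ρ p.2 * (ρ p.2 - ρ p.1)⁻¹
      = (k : ℝ) * ((k : ℝ) - 1) := by
    rw [← Finset.sum_add_distrib, ← card_PD_real]
    refine Finset.sum_congr rfl fun p hp => ?_
    have hne : ρ p.1 - ρ p.2 ≠ 0 := sub_ne_zero.2 fun he =>
      (Finset.mem_filter.1 hp).2 (hρ he).symm
    have hne' : ρ p.2 - ρ p.1 ≠ 0 := fun he => hne (by linarith [sub_eq_zero.1 he])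
    field_simp
    ring
  rw [h]
  linarith [h2, h3]

lemma sum_triples {k : ℕ} (g : Fin k → Fin k → Fin k → ℝ) :
    ∑ i : Fin k, ∑ ℓ ∈ Finset.univ.erase i, ∑ m ∈ (Finset.univ.erase i).erase ℓ, g i ℓ m
      = ∑ p ∈ TD k, g p.1 p.2.1 p.2.2 := by
  rw [TD, Finset.sum_filter, Fintype.sum_prod_type]
  refine Finset.sum_congr rfl fun i _ => ?_
  rw [Fintype.sum_prod_type, ← Finset.filter_ne' Finset.univ i, Finset.sum_filter]
  refine Finset.sum_congr rfl fun ℓ _ => ?_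
  by_cases h1 : ℓ ≠ i
  · rw [if_pos h1]
    have herase : ((Finset.univ.filter (fun a => a ≠ i)).erase ℓ)
        = Finset.univ.filter (fun m => m ≠ ℓ ∧ m ≠ i) := by
      rw [← Finset.filter_ne' (Finset.univ.filter (fun a => a ≠ i)) ℓ, Finset.filter_filter]
      exact Finset.filter_congr fun m _ => by tauto
    rw [herase, Finset.sum_filter]
    refine Finset.sum_congr rfl fun m _ => ?_
    by_cases h2 : m ≠ ℓ ∧ m ≠ i
    · rw [if_pos h2, if_pos ⟨h1, h2.2, h2.1⟩]
    · rw [if_neg h2, if_neg (by tauto)]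
  · rw [if_neg h1]
    exact (Finset.sum_eq_zero fun m _ => if_neg (by tauto)).symm

lemma triple_cycle {k : ℕ} (g : Fin k → Fin k → Fin k → ℝ) :
    ∑ p ∈ TD k, g p.1 p.2.1 p.2.2 = ∑ p ∈ TD k, g p.2.1 p.2.2 p.1 := by
  refine Finset.sum_nbij' (i := fun p => (p.2.2, p.1, p.2.1)) (j := fun p => (p.2.1, p.2.2, p.1))
    ?_ ?_ ?_ ?_ ?_
  · intro p hp
    simp only [TD, Finset.mem_filter, Finset.mem_univ, true_and] at *
    exact ⟨fun h => hp.2.1 h.symm, fun h => hp.2.2 h.symm, hp.1⟩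
  · intro p hp
    simp only [TD, Finset.mem_filter, Finset.mem_univ, true_and] at *
    exact ⟨hp.2.2, fun h => hp.1 h.symm, fun h => hp.2.1 h.symm⟩
  · intro p _; rfl
  · intro p _; rfl
  · intro p _; rfl

lemma card_TD_real {k : ℕ} : ∑ p ∈ TD k, (1 : ℝ) = (k : ℝ) * ((k : ℝ) - 1) * ((k : ℝ) - 2) := by
  rw [← sum_triples (g := fun _ _ _ => (1:ℝ))]
  have hc : ∀ (i ℓ : Fin k), ℓ ∈ Finset.univ.erase i →
      ((Finset.univ.erase i).erase ℓ).card = k - 1 - 1 := fun i ℓ hℓ => by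
    rw [Finset.card_erase_of_mem hℓ, Finset.card_erase_of_mem (Finset.mem_univ _),
      Finset.card_univ, Fintype.card_fin]
  have h1 : ∀ (i : Fin k), ∑ ℓ ∈ Finset.univ.erase i, ∑ m ∈ (Finset.univ.erase i).erase ℓ, (1:ℝ)
      = ((k - 1 : ℕ) : ℝ) * ((k - 1 - 1 : ℕ) : ℝ) := by
    intro i
    rw [Finset.sum_congr rfl (fun ℓ hℓ => by
      rw [Finset.sum_const, hc i ℓ hℓ, nsmul_eq_mul, mul_one])]
    rw [Finset.sum_const, Finset.card_erase_of_mem (Finset.mem_univ i), Finset.card_univ,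
      Fintype.card_fin, nsmul_eq_mul]
  rw [Finset.sum_congr rfl (fun i _ => h1 i), Finset.sum_const, Finset.card_univ,
    Fintype.card_fin, nsmul_eq_mul]
  rcases k with _ | _ | m
  · norm_num
  · norm_num
  · push_cast [Nat.add_sub_cancel]
    ring

lemma S_sq_sub_T {k : ℕ} (i : Fin k) (ρ : Fin k → ℝ) :
    (Sfun i ρ) ^ 2 - Tfun i ρ =
      ∑ ℓ ∈ Finset.univ.erase i, ∑ m ∈ (Finset.univ.erase i).erase ℓ,
        (ρ i - ρ ℓ)⁻¹ * (ρ i - ρ m)⁻¹ := by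
  have hsq : (Sfun i ρ) ^ 2 = ∑ ℓ ∈ Finset.univ.erase i, ∑ m ∈ Finset.univ.erase i,
      (ρ i - ρ ℓ)⁻¹ * (ρ i - ρ m)⁻¹ := by
    rw [sq, Sfun, Finset.sum_mul_sum]
  have hsplit : ∀ ℓ ∈ Finset.univ.erase i,
      (∑ m ∈ Finset.univ.erase i, (ρ i - ρ ℓ)⁻¹ * (ρ i - ρ m)⁻¹)
        = ((ρ i - ρ ℓ) ^ 2)⁻¹ + ∑ m ∈ (Finset.univ.erase i).erase ℓ,
            (ρ i - ρ ℓ)⁻¹ * (ρ i - ρ m)⁻¹ := by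
    intro ℓ hℓ
    rw [← Finset.add_sum_erase _ _ hℓ, ← mul_inv, ← sq]
  rw [hsq, Finset.sum_congr rfl hsplit, Finset.sum_add_distrib, Tfun]
  ring

lemma cyclic_ne {k : ℕ} {ρ : Fin k → ℝ} (hρ : Function.Injective ρ)
    {p : Fin k × Fin k × Fin k} (hp : p ∈ TD k) :
    ρ p.1 - ρ p.2.1 ≠ 0 ∧ ρ p.1 - ρ p.2.2 ≠ 0 ∧ ρ p.2.1 - ρ p.2.2 ≠ 0 := by
  rw [TD, Finset.mem_filter] at hp
  refine ⟨sub_ne_zero.2 fun h => hp.2.1 (hρ h).symm,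
    sub_ne_zero.2 fun h => hp.2.2.1 (hρ h).symm,
    sub_ne_zero.2 fun h => hp.2.2.2 (hρ h).symm⟩

lemma sum_Q_zero {k : ℕ} {ρ : Fin k → ℝ} (hρ : Function.Injective ρ) :
    ∑ i : Fin k, ((Sfun i ρ) ^ 2 - Tfun i ρ) = 0 := by
  have hT : ∑ i : Fin k, ((Sfun i ρ) ^ 2 - Tfun i ρ)
      = ∑ p ∈ TD k, (ρ p.1 - ρ p.2.1)⁻¹ * (ρ p.1 - ρ p.2.2)⁻¹ := by
    rw [← sum_triples (g := fun i ℓ m => (ρ i - ρ ℓ)⁻¹ * (ρ i - ρ m)⁻¹)]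
    exact Finset.sum_congr rfl fun i _ => S_sq_sub_T i ρ
  set g : Fin k → Fin k → Fin k → ℝ := fun a b c => (ρ a - ρ b)⁻¹ * (ρ a - ρ c)⁻¹ with hg
  have c1 : ∑ p ∈ TD k, g p.1 p.2.1 p.2.2 = ∑ p ∈ TD k, g p.2.1 p.2.2 p.1 := triple_cycle g
  have c2 : ∑ p ∈ TD k, g p.2.1 p.2.2 p.1 = ∑ p ∈ TD k, g p.2.2 p.1 p.2.1 :=
    triple_cycle (fun a b c => g b c a)
  have key : ∑ p ∈ TD k, (g p.1 p.2.1 p.2.2 + g p.2.1 p.2.2 p.1 + g p.2.2 p.1 p.2.1) = 0 := by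
    refine Finset.sum_eq_zero fun p hp => ?_
    obtain ⟨h1, h2, h3⟩ := cyclic_ne hρ hp
    have h1' : ρ p.2.1 - ρ p.1 ≠ 0 := fun h => h1 (by linarith [sub_eq_zero.1 h])
    have h2' : ρ p.2.2 - ρ p.1 ≠ 0 := fun h => h2 (by linarith [sub_eq_zero.1 h])
    have h3' : ρ p.2.2 - ρ p.2.1 ≠ 0 := fun h => h3 (by linarith [sub_eq_zero.1 h])
    rw [hg]
    field_simp
    ring
  rw [Finset.sum_add_distrib, Finset.sum_add_distrib, ← c1, ← c2, ← c1] at key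
  rw [hT]
  have : ∑ p ∈ TD k, g p.1 p.2.1 p.2.2
      = ∑ p ∈ TD k, (ρ p.1 - ρ p.2.1)⁻¹ * (ρ p.1 - ρ p.2.2)⁻¹ := rfl
  linarith [key, this]

lemma sum_Q_rho {k : ℕ} {ρ : Fin k → ℝ} (hρ : Function.Injective ρ) :
    ∑ i : Fin k, (ρ i) ^ 2 * ((Sfun i ρ) ^ 2 - Tfun i ρ)
      = (k : ℝ) * ((k : ℝ) - 1) * ((k : ℝ) - 2) / 3 := by
  have hT : ∑ i : Fin k, (ρ i) ^ 2 * ((Sfun i ρ) ^ 2 - Tfun i ρ)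
      = ∑ p ∈ TD k, (ρ p.1) ^ 2 * ((ρ p.1 - ρ p.2.1)⁻¹ * (ρ p.1 - ρ p.2.2)⁻¹) := by
    rw [← sum_triples (g := fun i ℓ m => (ρ i) ^ 2 * ((ρ i - ρ ℓ)⁻¹ * (ρ i - ρ m)⁻¹))]
    refine Finset.sum_congr rfl fun i _ => ?_
    rw [S_sq_sub_T i ρ, Finset.mul_sum]
    exact Finset.sum_congr rfl fun ℓ _ => by rw [Finset.mul_sum]
  set g : Fin k → Fin k → Fin k → ℝ :=
    fun a b c => (ρ a) ^ 2 * ((ρ a - ρ b)⁻¹ * (ρ a - ρ c)⁻¹) with hg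
  have c1 : ∑ p ∈ TD k, g p.1 p.2.1 p.2.2 = ∑ p ∈ TD k, g p.2.1 p.2.2 p.1 := triple_cycle g
  have c2 : ∑ p ∈ TD k, g p.2.1 p.2.2 p.1 = ∑ p ∈ TD k, g p.2.2 p.1 p.2.1 :=
    triple_cycle (fun a b c => g b c a)
  have key : ∑ p ∈ TD k, (g p.1 p.2.1 p.2.2 + g p.2.1 p.2.2 p.1 + g p.2.2 p.1 p.2.1)
      = (k : ℝ) * ((k : ℝ) - 1) * ((k : ℝ) - 2) := by
    rw [← card_TD_real]
    refine Finset.sum_congr rfl fun p hp => ?_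
    obtain ⟨h1, h2, h3⟩ := cyclic_ne hρ hp
    have h1' : ρ p.2.1 - ρ p.1 ≠ 0 := fun h => h1 (by linarith [sub_eq_zero.1 h])
    have h2' : ρ p.2.2 - ρ p.1 ≠ 0 := fun h => h2 (by linarith [sub_eq_zero.1 h])
    have h3' : ρ p.2.2 - ρ p.2.1 ≠ 0 := fun h => h3 (by linarith [sub_eq_zero.1 h])
    rw [hg]
    field_simp
    ring
  rw [Finset.sum_add_distrib, Finset.sum_add_distrib, ← c1, ← c2, ← c1] at key
  rw [hT]
  have : ∑ p ∈ TD k, g p.1 p.2.1 p.2.2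
      = ∑ p ∈ TD k, (ρ p.1) ^ 2 * ((ρ p.1 - ρ p.2.1)⁻¹ * (ρ p.1 - ρ p.2.2)⁻¹) := rfl
  linarith [key, this]

/-- Doob transform identity: `L_{n,k} f = 2((1/h) 𝒢_{n−2k,0}(h f) + (1/6)k(k−1)(3n−4k+2) f)`
at every point of `(−1,1)^k` with pairwise distinct coordinates. -/
theorem genL_eq_doob_transform
    (n k : ℕ) (hn : 2 ≤ n) (hk1 : 1 ≤ k) (hk2 : k ≤ n - k)
    (ρ : Fin k → ℝ) (hρ : ∀ i, ρ i ∈ Set.Ioo (-1 : ℝ) 1)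
    (hdist : Function.Injective ρ)
    (f : (Fin k → ℝ) → ℝ) (hf : ContDiff ℝ (⊤ : ℕ∞) f) :
    genL n k f ρ =
      2 * ((vdm ρ)⁻¹ * genG ((n : ℝ) - 2 * k) 0 (fun x => vdm x * f x) ρ +
        (1 / 6 : ℝ) * k * (k - 1) * (3 * n - 4 * k + 2) * f ρ) := by
  have hh : vdm ρ ≠ 0 := vdm_ne_zero hdist
  -- Step 1 : the value of `genG` applied to `vdm * f`
  have hG : genG ((n : ℝ) - 2 * k) 0 (fun x => vdm x * f x) ρ
      = vdm ρ * ∑ i : Fin k,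
          ((1 - ρ i ^ 2) * ((Sfun i ρ ^ 2 - Tfun i ρ) * f ρ + 2 * Sfun i ρ * pder f i ρ
              + pder (pder f i) i ρ)
            - (((n : ℝ) - 2 * k) + (((n : ℝ) - 2 * k) + 2) * ρ i)
              * (Sfun i ρ * f ρ + pder f i ρ)) := by
    simp only [genG]
    rw [Finset.mul_sum, ← Finset.sum_sub_distrib]
    refine Finset.sum_congr rfl fun i _ => ?_
    rw [pder2_prod hdist hf i, congrFun (pder_prod_fun hf i) ρ, pder_vdm hdist i]
    ring
  have hGE : (vdm ρ)⁻¹ * genG ((n : ℝ) - 2 * k) 0 (fun x => vdm x * f x) ρ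
      = ∑ i : Fin k,
          ((1 - ρ i ^ 2) * ((Sfun i ρ ^ 2 - Tfun i ρ) * f ρ + 2 * Sfun i ρ * pder f i ρ
              + pder (pder f i) i ρ)
            - (((n : ℝ) - 2 * k) + (((n : ℝ) - 2 * k) + 2) * ρ i)
              * (Sfun i ρ * f ρ + pder f i ρ)) := by
    rw [hG, inv_mul_cancel_left₀ hh]
  rw [hGE]
  -- Step 2 : split the sum into a first/second order part and a zeroth order part
  have hsplitE : (∑ i : Fin k,
        ((1 - ρ i ^ 2) * ((Sfun i ρ ^ 2 - Tfun i ρ) * f ρ + 2 * Sfun i ρ * pder f i ρ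
            + pder (pder f i) i ρ)
          - (((n : ℝ) - 2 * k) + (((n : ℝ) - 2 * k) + 2) * ρ i)
            * (Sfun i ρ * f ρ + pder f i ρ)))
      = (∑ i : Fin k, ((1 - ρ i ^ 2) * (2 * Sfun i ρ * pder f i ρ + pder (pder f i) i ρ)
            - (((n : ℝ) - 2 * k) + (((n : ℝ) - 2 * k) + 2) * ρ i) * pder f i ρ))
        + (∑ i : Fin k, ((1 - ρ i ^ 2) * (Sfun i ρ ^ 2 - Tfun i ρ)
            - (((n : ℝ) - 2 * k) + (((n : ℝ) - 2 * k) + 2) * ρ i) * Sfun i ρ)) * f ρ := by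
    rw [Finset.sum_mul, ← Finset.sum_add_distrib]
    exact Finset.sum_congr rfl fun i _ => by ring
  -- Step 3 : the zeroth order sum is an explicit constant
  have hY : (∑ i : Fin k, ((1 - ρ i ^ 2) * (Sfun i ρ ^ 2 - Tfun i ρ)
        - (((n : ℝ) - 2 * k) + (((n : ℝ) - 2 * k) + 2) * ρ i) * Sfun i ρ))
      = -((k : ℝ) * ((k : ℝ) - 1) * ((k : ℝ) - 2) / 3)
        - (((n : ℝ) - 2 * k) + 2) * ((k : ℝ) * ((k : ℝ) - 1) / 2) := by
    have e1 : ∀ i ∈ Finset.univ, (1 - ρ i ^ 2) * (Sfun i ρ ^ 2 - Tfun i ρ)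
          - (((n : ℝ) - 2 * k) + (((n : ℝ) - 2 * k) + 2) * ρ i) * Sfun i ρ
        = ((Sfun i ρ ^ 2 - Tfun i ρ) - ρ i ^ 2 * (Sfun i ρ ^ 2 - Tfun i ρ))
          - (((n : ℝ) - 2 * k) * Sfun i ρ + (((n : ℝ) - 2 * k) + 2) * (ρ i * Sfun i ρ)) :=
      fun i _ => by ring
    rw [Finset.sum_congr rfl e1, Finset.sum_sub_distrib, Finset.sum_sub_distrib,
      Finset.sum_add_distrib, ← Finset.mul_sum, ← Finset.mul_sum,
      sum_Q_zero hdist, sum_Q_rho hdist, sum_Sfun hdist, sum_rhoS hdist]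
    ring
  rw [hsplitE, hY]
  -- Step 4 : expand `genL` and rewrite its singular drift term
  simp only [genL]
  have hcoef : ∀ i : Fin k, (∑ ℓ ∈ Finset.univ.erase i, (1 - ρ i ^ 2) / (ρ ℓ - ρ i))
      = -((1 - ρ i ^ 2) * Sfun i ρ) := by
    intro i
    rw [Sfun, Finset.mul_sum, ← Finset.sum_neg_distrib]
    refine Finset.sum_congr rfl fun ℓ _ => ?_
    rw [div_eq_mul_inv, show (ρ ℓ - ρ i) = -(ρ i - ρ ℓ) by ring, inv_neg]
    ring
  rw [show (∑ i : Fin k, (((n : ℝ) - 2 * k) + ((n : ℝ) - 2 * k + 2) * ρ i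
        + 2 * ∑ ℓ ∈ Finset.univ.erase i, (1 - ρ i ^ 2) / (ρ ℓ - ρ i)) * pder f i ρ)
      = ∑ i : Fin k, ((((n : ℝ) - 2 * k) + ((n : ℝ) - 2 * k + 2) * ρ i
        + 2 * (-((1 - ρ i ^ 2) * Sfun i ρ))) * pder f i ρ) from
    Finset.sum_congr rfl fun i _ => by rw [hcoef i]]
  -- Step 5 : match the first/second order parts and conclude by ring arithmetic
  have hL : (∑ i : Fin k, (1 - ρ i ^ 2) * pder (pder f i) i ρ)
      - (∑ i : Fin k, ((((n : ℝ) - 2 * k) + ((n : ℝ) - 2 * k + 2) * ρ i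
          + 2 * (-((1 - ρ i ^ 2) * Sfun i ρ))) * pder f i ρ))
      = ∑ i : Fin k, ((1 - ρ i ^ 2) * (2 * Sfun i ρ * pder f i ρ + pder (pder f i) i ρ)
          - (((n : ℝ) - 2 * k) + (((n : ℝ) - 2 * k) + 2) * ρ i) * pder f i ρ) := by
    rw [← Finset.sum_sub_distrib]
    exact Finset.sum_congr rfl fun i _ => by ring
  linear_combination 2 * hL
end
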